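/- arXiv:1111.3380 — 2 statements merged into one kernel-verified Lean document; each statement's English description precedes it below -/
import Mathlib

section
/- Fix λ > 0. If d = d(x) is a function with d ~ λ·log x as x → ∞, then I(x, d) = ∫₂^x exp(-d/log t)·dt/(log t)² satisfies I(x, d) ~ e^{-λ}·x/(log x)² as x → ∞. -/
/-!
Split `∫₂^x` at `y = x / (log x)³`, so that `log y = log x - 3 log log x ~ log x`.
For `d ≥ 0` the integrand on `[y, x]` lies between `e^{-d/log y} / (log x)²` and
`e^{-d/log x} / (log y)²`, and both are `~ e^{-λ} / (log x)²` because `d / log y` and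
`d / log x` tend to `λ`. The integrand on `[2, y]` is at most `1 / (log 2)²`, so that piece
is `O(y) = o(x / (log x)²)`.
-/

open Real Filter Topology Set

theorem continuousOn_exp_neg_div_log_div_log_sq (D : ℝ) :
    ContinuousOn (fun t => exp (-D / log t) / log t ^ 2) (Ioi 1) := by
  have hlog : ∀ t ∈ Ioi (1 : ℝ), log t ≠ 0 := fun t ht => (log_pos ht).ne'
  have hcont : ContinuousOn log (Ioi (1 : ℝ)) :=
    continuousOn_log.mono fun t ht => ne_of_gt (zero_lt_one.trans ht)
  exact ((continuousOn_const.div hcont hlog).rexp).div (hcont.pow 2)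
    fun t ht => pow_ne_zero 2 (hlog t ht)

theorem intervalIntegrable_exp_neg_div_log_div_log_sq (D : ℝ) {a b : ℝ} (ha : 1 < a)
    (hb : 1 < b) :
    IntervalIntegrable (fun t => exp (-D / log t) / log t ^ 2) MeasureTheory.volume a b :=
  ((continuousOn_exp_neg_div_log_div_log_sq D).mono
    (ordConnected_Ioi.uIcc_subset ha hb)).intervalIntegrable

theorem exp_neg_div_log_div_log_sq_mem_Icc {D a b t : ℝ} (hD : 0 ≤ D) (ha : 1 < a)
    (ht : t ∈ Icc a b) :
    exp (-D / log t) / log t ^ 2 ∈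
      Icc (exp (-D / log a) / log b ^ 2) (exp (-D / log b) / log a ^ 2) := by
  have hloga : 0 < log a := log_pos ha
  have hat : log a ≤ log t := log_le_log (by linarith) ht.1
  have htb : log t ≤ log b := log_le_log (by linarith [ht.1]) ht.2
  have hlogt : 0 < log t := hloga.trans_le hat
  simp only [neg_div]
  constructor <;> gcongr

section Interval

variable {D a b : ℝ} (hD : 0 ≤ D) (ha : 1 < a) (hab : a ≤ b)
include hD ha hab

theorem mul_exp_neg_div_log_div_log_sq_le_integral :
    (b - a) * (exp (-D / log a) / log b ^ 2) ≤ ∫ t in a..b, exp (-D / log t) / log t ^ 2 := by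
  have h := intervalIntegral.integral_mono_on hab intervalIntegrable_const
    (intervalIntegrable_exp_neg_div_log_div_log_sq D ha (ha.trans_le hab))
    fun t ht => (exp_neg_div_log_div_log_sq_mem_Icc hD ha ht).1
  rwa [intervalIntegral.integral_const, smul_eq_mul] at h

theorem integral_le_mul_exp_neg_div_log_div_log_sq :
    ∫ t in a..b, exp (-D / log t) / log t ^ 2 ≤ (b - a) * (exp (-D / log b) / log a ^ 2) := by
  have h := intervalIntegral.integral_mono_on hab
    (intervalIntegrable_exp_neg_div_log_div_log_sq D ha (ha.trans_le hab))
    intervalIntegrable_const fun t ht => (exp_neg_div_log_div_log_sq_mem_Icc hD ha ht).2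
  rwa [intervalIntegral.integral_const, smul_eq_mul] at h

end Interval

section Split

variable {D c y x : ℝ} (hD : 0 ≤ D) (hc : 1 < c) (hcy : c ≤ y) (hyx : y ≤ x)
include hD hc hcy hyx

theorem mul_exp_neg_div_log_div_log_sq_le_integral_of_le :
    (x - y) * (exp (-D / log y) / log x ^ 2) ≤ ∫ t in c..x, exp (-D / log t) / log t ^ 2 := by
  have hy : 1 < y := hc.trans_le hcy
  rw [← intervalIntegral.integral_add_adjacent_intervals
    (intervalIntegrable_exp_neg_div_log_div_log_sq D hc hy)
    (intervalIntegrable_exp_neg_div_log_div_log_sq D hy (hy.trans_le hyx))]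
  have hleft : 0 ≤ ∫ t in c..y, exp (-D / log t) / log t ^ 2 :=
    intervalIntegral.integral_nonneg hcy fun t _ => by positivity
  linarith [mul_exp_neg_div_log_div_log_sq_le_integral hD hy hyx]

theorem integral_le_mul_exp_neg_div_log_div_log_sq_add :
    ∫ t in c..x, exp (-D / log t) / log t ^ 2 ≤
      y * (exp (-D / log y) / log c ^ 2) + x * (exp (-D / log x) / log y ^ 2) := by
  have hy : 1 < y := hc.trans_le hcy
  rw [← intervalIntegral.integral_add_adjacent_intervals
    (intervalIntegrable_exp_neg_div_log_div_log_sq D hc hy)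
    (intervalIntegrable_exp_neg_div_log_div_log_sq D hy (hy.trans_le hyx))]
  have hleft := integral_le_mul_exp_neg_div_log_div_log_sq hD hc hcy
  have hright := integral_le_mul_exp_neg_div_log_div_log_sq hD hy hyx
  have hleft' : (y - c) * (exp (-D / log y) / log c ^ 2) ≤
      y * (exp (-D / log y) / log c ^ 2) := by
    gcongr; linarith
  have hright' : (x - y) * (exp (-D / log x) / log y ^ 2) ≤
      x * (exp (-D / log x) / log y ^ 2) := by
    gcongr; linarith
  linarith

end Split

theorem integral_div_mem_Icc {D x : ℝ} (hD : 0 ≤ D) (hL : 1 ≤ log x)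
    (hy : 2 ≤ x / log x ^ 3) :
    (∫ t in (2:ℝ)..x, exp (-D / log t) / log t ^ 2) / (x / log x ^ 2) ∈
      Icc ((1 - (log x)⁻¹ ^ 3) * exp (-D / log (x / log x ^ 3)))
        (exp (-D / log (x / log x ^ 3)) * (log x)⁻¹ / log 2 ^ 2 +
          exp (-D / log x) * (log x / log (x / log x ^ 3)) ^ 2) := by
  have hL3 : 0 < log x ^ 3 := pow_pos (by linarith) 3
  have hx : 0 < x := (div_pos_iff_of_pos_right hL3).mp (by linarith)
  have hyx : x / log x ^ 3 ≤ x := div_le_self hx.le (one_le_pow₀ hL)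
  have hlogy : 0 < log (x / log x ^ 3) := log_pos (by linarith)
  have hscale : 0 < x / log x ^ 2 := div_pos hx (pow_pos (by linarith) 2)
  constructor
  · rw [le_div_iff₀ hscale]
    refine le_of_eq_of_le ?_
      (mul_exp_neg_div_log_div_log_sq_le_integral_of_le hD one_lt_two hy hyx)
    field_simp
  · rw [div_le_iff₀ hscale]
    refine (integral_le_mul_exp_neg_div_log_div_log_sq_add hD one_lt_two hy hyx).trans_eq ?_
    field_simp

theorem tendsto_div_log_pow_atTop (n : ℕ) : Tendsto (fun x => x / log x ^ n) atTop atTop := by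
  refine ((tendsto_exp_div_pow_atTop n).comp tendsto_log_atTop).congr' ?_
  filter_upwards [eventually_gt_atTop 0] with x hx
  simp [exp_log hx]

theorem tendsto_log_div_log_div_log_pow (n : ℕ) :
    Tendsto (fun x => log x / log (x / log x ^ n)) atTop (𝓝 1) := by
  have hloglog : Tendsto (fun x => log (log x) / log x) atTop (𝓝 0) :=
    isLittleO_log_id_atTop.tendsto_div_nhds_zero.comp tendsto_log_atTop
  have h : Tendsto (fun x => (1 - n * (log (log x) / log x))⁻¹) atTop (𝓝 1) := by
    simpa using ((hloglog.const_mul (n : ℝ)).const_sub 1).inv₀ (by simp)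
  refine h.congr' ?_
  filter_upwards [eventually_gt_atTop 0, tendsto_log_atTop.eventually_gt_atTop 0] with x hx hL
  rw [log_div hx.ne' (pow_ne_zero _ hL.ne'), log_pow]
  field_simp

theorem tendsto_div_log_div_log_pow {D : ℝ → ℝ} {lam : ℝ}
    (hD : Tendsto (fun x => D x / log x) atTop (𝓝 lam)) (n : ℕ) :
    Tendsto (fun x => D x / log (x / log x ^ n)) atTop (𝓝 lam) := by
  have h := hD.mul (tendsto_log_div_log_div_log_pow n)
  rw [mul_one] at h
  refine h.congr' ?_
  filter_upwards [tendsto_log_atTop.eventually_gt_atTop 0] with x hL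
  field_simp

theorem tendsto_integral_exp_neg_div_log_div_log_sq_div {D : ℝ → ℝ} {lam : ℝ}
    (hlam : 0 < lam) (hD : Tendsto (fun x => D x / log x) atTop (𝓝 lam)) :
    Tendsto (fun x => (∫ t in (2:ℝ)..x, exp (-D x / log t) / log t ^ 2) / (x / log x ^ 2))
      atTop (𝓝 (exp (-lam))) := by
  have hexp_y :
      Tendsto (fun x => exp (-D x / log (x / log x ^ 3))) atTop (𝓝 (exp (-lam))) := by
    simpa only [neg_div] using (tendsto_div_log_div_log_pow hD 3).neg.rexp
  have hexp_x : Tendsto (fun x => exp (-D x / log x)) atTop (𝓝 (exp (-lam))) := by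
    simpa only [neg_div] using hD.neg.rexp
  have hinv_log : Tendsto (fun x => (log x)⁻¹) atTop (𝓝 0) :=
    tendsto_log_atTop.inv_tendsto_atTop
  have hlower := ((hinv_log.pow 3).const_sub 1).mul hexp_y
  have hupper := ((hexp_y.mul hinv_log).div_const (log 2 ^ 2)).add
    (hexp_x.mul ((tendsto_log_div_log_div_log_pow 3).pow 2))
  simp only [zero_pow three_ne_zero, sub_zero, one_mul, mul_zero, zero_div, zero_add, one_pow,
    mul_one] at hlower hupper
  have hD_nonneg : ∀ᶠ x in atTop, 0 ≤ D x := by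
    filter_upwards [hD.eventually (eventually_gt_nhds hlam),
      tendsto_log_atTop.eventually_gt_atTop 0] with x hx hL
    exact ((div_pos_iff_of_pos_right hL).mp hx).le
  have hbounds := hD_nonneg.and <| (tendsto_log_atTop.eventually_ge_atTop 1).and <|
    (tendsto_div_log_pow_atTop 3).eventually_ge_atTop 2
  exact tendsto_of_tendsto_of_tendsto_of_le_of_le' hlower hupper
    (hbounds.mono fun x ⟨hDx, hL, hy⟩ => (integral_div_mem_Icc hDx hL hy).1)
    (hbounds.mono fun x ⟨hDx, hL, hy⟩ => (integral_div_mem_Icc hDx hL hy).2)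

/-- If `d = d(x) ~ λ log x` as `x → ∞` with `λ > 0`, then
`I(x,d) = ∫₂^x exp(-d/log t) dt/(log t)² ~ e^{-λ} x/(log x)²`. -/
theorem I_asymptotic (lam : ℝ) (hlam : 0 < lam) (d : ℝ → ℝ)
    (hd : Tendsto (fun x => d x / (lam * Real.log x)) atTop (nhds 1)) :
    Tendsto (fun x =>
        (∫ t in (2:ℝ)..x, Real.exp (-(d x) / Real.log t) / (Real.log t) ^ 2) /
          (Real.exp (-lam) * x / (Real.log x) ^ 2)) atTop (nhds 1) := by
  have hdL : Tendsto (fun x => d x / log x) atTop (𝓝 lam) := by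
    have h := hd.const_mul lam
    rw [mul_one] at h
    refine h.congr fun x => ?_
    rw [← mul_div_assoc, mul_div_mul_left _ _ hlam.ne']
  have h := (tendsto_integral_exp_neg_div_log_div_log_sq_div hlam hdL).div_const (exp (-lam))
  rw [div_self (exp_pos _).ne'] at h
  refine h.congr fun x => ?_
  rw [div_div, mul_comm, mul_div_assoc]
end

section
/- Setting d̄ = d/log x, for all x ≥ 16 and 0 < d ≤ (log x)² one has I(x, d) = e^{-d̄}·(x/(log x)²)·(1 + O((1 + d̄)·log log x / log x)), with an absolute implied constant. -/
/-!
Upper bound: for `t ≤ x` the weight `exp (-d / log t)` is at most `e^{-d̄}`, and integrating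
`t / log² t` by parts gives `∫₂^x dt / log² t = x / log² x + O(x / log³ x)`; the remainder
`∫₂^x dt / log³ t` is estimated by splitting at `√x`, where `log t ≥ log x / 2`.

Lower bound: on `[x / log x, x]` one has `log t ≥ log x - log log x`, so the weight is at least
`e^{-d̄} exp(-d̄ log log x / (log x - log log x)) ≥ e^{-d̄} (1 - 2 d̄ log log x / log x)`,
and the interval has length `x (1 - 1 / log x)`.
-/

open Real MeasureTheory Set

noncomputable def weightedLogIntegral (x d : ℝ) : ℝ :=
  ∫ t in (2:ℝ)..x, exp (-d / log t) / log t ^ 2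

lemma log_le_half_self {y : ℝ} (hy : 0 < y) : log y ≤ y / 2 := by
  have hs : log (√y) ≤ √y - 1 := log_le_sub_one_of_pos (sqrt_pos.mpr hy)
  rw [log_sqrt hy.le] at hs
  nlinarith [sq_sqrt hy.le, sq_nonneg (√y - 2)]

lemma log_pow_three_le_sqrt {x : ℝ} (hx : 1 ≤ x) : log x ^ 3 ≤ 48 * √x := by
  have h := pow_div_factorial_le_exp (log x / 2) (div_nonneg (log_nonneg hx) zero_le_two) 3
  rw [exp_half, exp_log (by linarith)] at h
  norm_num [Nat.factorial] at h
  linarith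

lemma one_le_log_log {x : ℝ} (hx : 16 ≤ x) : 1 ≤ log (log x) := by
  have h16 : log 16 = 4 * log 2 := by
    rw [show (16:ℝ) = 2 ^ 4 by norm_num, log_pow]; norm_num
  have he : exp 1 ≤ log x := by
    linarith [exp_one_lt_d9, log_two_gt_d9, log_le_log (by norm_num) hx]
  simpa using log_le_log (exp_pos 1) he

lemma intervalIntegrable_of_continuousAt_of_lt {f : ℝ → ℝ} {a b c : ℝ}
    (hf : ∀ t, c < t → ContinuousAt f t) (ha : c < a) (hb : c < b) :
    IntervalIntegrable f volume a b :=
  ContinuousOn.intervalIntegrable fun t ht =>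
    (hf t (lt_of_lt_of_le (lt_min ha hb) ht.1)).continuousWithinAt

lemma intervalIntegrable_one_div_log_pow (k : ℕ) {a b : ℝ} (ha : 1 < a) (hb : 1 < b) :
    IntervalIntegrable (fun t => 1 / log t ^ k) volume a b := by
  refine intervalIntegrable_of_continuousAt_of_lt (fun t ht => ?_) ha hb
  have : log t ≠ 0 := (log_pos ht).ne'
  have : t ≠ 0 := by positivity
  fun_prop (disch := simp [*])

lemma intervalIntegrable_exp_div_log_sq (d : ℝ) {a b : ℝ} (ha : 1 < a) (hb : 1 < b) :
    IntervalIntegrable (fun t => exp (-d / log t) / log t ^ 2) volume a b := by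
  refine intervalIntegrable_of_continuousAt_of_lt (fun t ht => ?_) ha hb
  have : log t ≠ 0 := (log_pos ht).ne'
  have : t ≠ 0 := by positivity
  fun_prop (disch := simp [*])

lemma hasDerivAt_div_log_sq {t : ℝ} (ht : 1 < t) :
    HasDerivAt (fun t => t / log t ^ 2) (1 / log t ^ 2 - 2 * (1 / log t ^ 3)) t := by
  have hl : log t ≠ 0 := (log_pos ht).ne'
  have ht0 : t ≠ 0 := by positivity
  refine ((hasDerivAt_id' t).fun_div ((hasDerivAt_log ht0).fun_pow 2)
    (pow_ne_zero 2 hl)).congr_deriv ?_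
  field_simp
  ring

lemma integral_one_div_log_sq {x : ℝ} (hx : 2 ≤ x) :
    ∫ t in (2:ℝ)..x, 1 / log t ^ 2 =
      x / log x ^ 2 - 2 / log 2 ^ 2 + 2 * ∫ t in (2:ℝ)..x, 1 / log t ^ 3 := by
  have hint := (intervalIntegrable_one_div_log_pow 3 one_lt_two (by linarith)).const_mul 2
  have hftc := intervalIntegral.integral_eq_sub_of_hasDerivAt
    (fun t ht => hasDerivAt_div_log_sq (by linarith [(uIcc_of_le hx ▸ ht).1]))
    ((intervalIntegrable_one_div_log_pow 2 one_lt_two (by linarith)).sub hint)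
  rw [intervalIntegral.integral_sub
    (intervalIntegrable_one_div_log_pow 2 one_lt_two (by linarith)) hint,
    intervalIntegral.integral_const_mul] at hftc
  linarith

lemma integral_le_mul_of_le_const {f : ℝ → ℝ} {a b C : ℝ} (hab : a ≤ b)
    (hf : IntervalIntegrable f volume a b) (h : ∀ t ∈ Icc a b, f t ≤ C) :
    ∫ t in a..b, f t ≤ C * (b - a) :=
  (intervalIntegral.integral_mono_on hab hf intervalIntegrable_const h).trans_eq
    (by simp [mul_comm])

lemma mul_le_integral_of_const_le {f : ℝ → ℝ} {a b C : ℝ} (hab : a ≤ b)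
    (hf : IntervalIntegrable f volume a b) (h : ∀ t ∈ Icc a b, C ≤ f t) :
    C * (b - a) ≤ ∫ t in a..b, f t :=
  (intervalIntegral.integral_mono_on hab intervalIntegrable_const hf h).trans_eq'
    (by simp [mul_comm])

lemma integral_one_div_log_cube_le {x : ℝ} (hx : 4 ≤ x) :
    ∫ t in (2:ℝ)..x, 1 / log t ^ 3 ≤ 200 * x / log x ^ 3 := by
  set L := log x
  have hL : 0 < L := log_pos (by linarith)
  have hs2 : 2 ≤ √x := le_sqrt_of_sq_le (by linarith)
  have hsx : √x ≤ x := by nlinarith [mul_self_sqrt (by linarith : 0 ≤ x)]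
  have hint (a b : ℝ) (ha : 2 ≤ a) (hb : 2 ≤ b) :=
    intervalIntegrable_one_div_log_pow 3 (a := a) (b := b) (by linarith) (by linarith)
  have hlow : ∫ t in (2:ℝ)..√x, 1 / log t ^ 3 ≤ 4 * (√x - 2) := by
    refine integral_le_mul_of_le_const hs2 (hint _ _ le_rfl hs2) fun t ht => ?_
    have h2 : 0.69 ≤ log t := by linarith [log_two_gt_d9, log_le_log two_pos ht.1]
    rw [div_le_iff₀ (by positivity)]
    nlinarith [pow_le_pow_left₀ (by norm_num) h2 3]
  have hhigh : ∫ t in √x..x, 1 / log t ^ 3 ≤ 8 / L ^ 3 * (x - √x) := by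
    refine integral_le_mul_of_le_const hsx (hint _ _ hs2 (hs2.trans hsx)) fun t ht => ?_
    have hlt : L / 2 ≤ log t := by
      rw [← log_sqrt (by linarith)]; exact log_le_log (by linarith) ht.1
    rw [div_le_div_iff₀ (pow_pos (by linarith) 3) (by positivity)]
    nlinarith [pow_le_pow_left₀ (half_pos hL).le hlt 3]
  have hsqrt : √x ≤ 48 * x / L ^ 3 := by
    rw [le_div_iff₀ (by positivity)]
    nlinarith [log_pow_three_le_sqrt (x := x) (by linarith), mul_self_sqrt (by linarith : 0 ≤ x)]
  rw [← intervalIntegral.integral_add_adjacent_intervals (hint _ _ le_rfl hs2)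
    (hint _ _ hs2 (hs2.trans hsx))]
  have : 8 / L ^ 3 * (x - √x) ≤ 8 * x / L ^ 3 := by
    rw [div_mul_eq_mul_div]; gcongr; linarith
  have : 200 * x / L ^ 3 = 4 * (48 * x / L ^ 3) + 8 * x / L ^ 3 := by ring
  linarith

lemma integral_one_div_log_sq_le {x : ℝ} (hx : 4 ≤ x) :
    ∫ t in (2:ℝ)..x, 1 / log t ^ 2 ≤ x / log x ^ 2 + 400 * x / log x ^ 3 := by
  have h2 : 0 < 2 / log 2 ^ 2 := by have := log_pos one_lt_two; positivity
  have h400 : 400 * x / log x ^ 3 = 2 * (200 * x / log x ^ 3) := by ring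
  linarith [integral_one_div_log_sq (by linarith : (2:ℝ) ≤ x), integral_one_div_log_cube_le hx]

lemma weightedLogIntegral_le_mul_integral {x d : ℝ} (hx : 2 ≤ x) (hd : 0 ≤ d) :
    weightedLogIntegral x d ≤ exp (-(d / log x)) * ∫ t in (2:ℝ)..x, 1 / log t ^ 2 := by
  rw [← intervalIntegral.integral_const_mul]
  refine intervalIntegral.integral_mono_on hx
    (intervalIntegrable_exp_div_log_sq d one_lt_two (by linarith))
    ((intervalIntegrable_one_div_log_pow 2 one_lt_two (by linarith)).const_mul _) fun t ht => ?_
  have hlt : 0 < log t := log_pos (by linarith [ht.1])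
  rw [mul_one_div, neg_div]
  gcongr
  exacts [by linarith [ht.1], ht.2]

lemma mul_le_weightedLogIntegral {a x d : ℝ} (ha : 2 ≤ a) (hax : a ≤ x) (hd : 0 ≤ d) :
    exp (-(d / log a)) / log x ^ 2 * (x - a) ≤ weightedLogIntegral x d := by
  have hint := intervalIntegrable_exp_div_log_sq d (a := 2) (b := a) one_lt_two (by linarith)
  have hint' := intervalIntegrable_exp_div_log_sq d (a := a) (b := x) (by linarith) (by linarith)
  have hhead : 0 ≤ ∫ t in (2:ℝ)..a, exp (-d / log t) / log t ^ 2 :=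
    intervalIntegral.integral_nonneg ha fun t _ => by positivity
  have htail : exp (-(d / log a)) / log x ^ 2 * (x - a) ≤
      ∫ t in a..x, exp (-d / log t) / log t ^ 2 := by
    refine mul_le_integral_of_const_le hax hint' fun t ht => ?_
    have hla : 0 < log a := log_pos (by linarith)
    have hlt : 0 < log t := log_pos (by linarith [ht.1])
    have hat : log a ≤ log t := log_le_log (by linarith) ht.1
    have htx : log t ≤ log x := log_le_log (by linarith [ht.1]) ht.2
    rw [neg_div]
    exact div_le_div₀ (exp_pos _).le
      (exp_le_exp.2 (neg_le_neg (div_le_div_of_nonneg_left hd hla hat)))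
      (pow_pos hlt 2) (pow_le_pow_left₀ hlt.le htx 2)
  rw [weightedLogIntegral, ← intervalIntegral.integral_add_adjacent_intervals hint hint']
  linarith

lemma weightedLogIntegral_le {x d : ℝ} (hx : 4 ≤ x) (hd : 0 ≤ d) :
    weightedLogIntegral x d ≤ exp (-(d / log x)) * (x / log x ^ 2) * (1 + 400 / log x) := by
  have hL : 0 < log x := log_pos (by linarith)
  calc weightedLogIntegral x d
      ≤ exp (-(d / log x)) * ∫ t in (2:ℝ)..x, 1 / log t ^ 2 :=
        weightedLogIntegral_le_mul_integral (by linarith) hd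
    _ ≤ exp (-(d / log x)) * (x / log x ^ 2 + 400 * x / log x ^ 3) := by
        gcongr; exact integral_one_div_log_sq_le hx
    _ = exp (-(d / log x)) * (x / log x ^ 2) * (1 + 400 / log x) := by field_simp

lemma le_weightedLogIntegral {x d : ℝ} (hx : 16 ≤ x) (hd : 0 ≤ d) :
    exp (-(d / log x)) * (x / log x ^ 2) * (1 - (2 * (d / log x) + 1) * log (log x) / log x) ≤
      weightedLogIntegral x d := by
  set L := log x
  set l := log L
  have hL : 0 < L := log_pos (by linarith)
  have hl : 1 ≤ l := one_le_log_log hx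
  have hlL : l ≤ L / 2 := log_le_half_self hL
  have hLx : L ≤ x / 2 := log_le_half_self (by linarith)
  have ha : 2 ≤ x / L := by rw [le_div_iff₀ hL]; linarith
  have hax : x / L ≤ x := div_le_self (by linarith) (by linarith)
  have hloga : log (x / L) = L - l := log_div (by linarith) hL.ne'
  have hbound := mul_le_weightedLogIntegral ha hax hd
  rw [hloga] at hbound
  set u := 2 * (d / L) * l / L with hu_def
  have hu : 0 ≤ u := by positivity
  have hLl : 0 < L - l := by linarith
  have hshift : d / (L - l) ≤ d / L + u := by
    have hgap : d / L + u - d / (L - l) = d * l * (L - 2 * l) / (L ^ 2 * (L - l)) := by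
      rw [hu_def]; field_simp [hLl.ne']; ring
    have : 0 ≤ d * l * (L - 2 * l) / (L ^ 2 * (L - l)) :=
      div_nonneg (mul_nonneg (mul_nonneg hd (by linarith)) (by linarith)) (by positivity)
    linarith
  have hexp : exp (-(d / L)) * (1 - u) ≤ exp (-(d / (L - l))) :=
    calc exp (-(d / L)) * (1 - u) ≤ exp (-(d / L)) * exp (-u) := by
          gcongr; exact one_sub_le_exp_neg u
      _ = exp (-(d / L + u)) := by rw [← exp_add]; ring_nf
      _ ≤ exp (-(d / (L - l))) := exp_le_exp.2 (by linarith)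
  calc exp (-(d / L)) * (x / L ^ 2) * (1 - (2 * (d / L) + 1) * l / L)
      ≤ exp (-(d / L)) * (x / L ^ 2) * ((1 - u) * (1 - 1 / L)) := by
        gcongr
        have hgap : (1 - u) * (1 - 1 / L) - (1 - (2 * (d / L) + 1) * l / L) =
            u / L + (l - 1) / L := by
          rw [hu_def]; field_simp; ring
        have : 0 ≤ u / L + (l - 1) / L :=
          add_nonneg (div_nonneg hu hL.le) (div_nonneg (by linarith) hL.le)
        linarith
    _ = exp (-(d / L)) * (1 - u) / L ^ 2 * (x - x / L) := by field_simp
    _ ≤ exp (-(d / (L - l))) / L ^ 2 * (x - x / L) := by gcongr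
    _ ≤ weightedLogIntegral x d := hbound

/-- With `d̄ = d/log x`, for `x ≥ 16` and `0 < d ≤ (log x)²`,
`I(x,d) = e^{-d̄} (x/(log x)²) (1 + O((1+d̄) log log x / log x))`,
with an absolute implied constant. -/
theorem I_two_sided :
    ∃ C : ℝ, 0 < C ∧ ∀ x : ℝ, 16 ≤ x → ∀ d : ℝ, 0 < d → d ≤ (Real.log x) ^ 2 →
      |(∫ t in (2:ℝ)..x, Real.exp (-d / Real.log t) / (Real.log t) ^ 2) -
          Real.exp (-(d / Real.log x)) * (x / (Real.log x) ^ 2)| ≤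
        Real.exp (-(d / Real.log x)) * (x / (Real.log x) ^ 2) *
          (C * (1 + d / Real.log x) * Real.log (Real.log x) / Real.log x) := by
  refine ⟨400, by norm_num, fun x hx d hd _ => ?_⟩
  have hupper := weightedLogIntegral_le (x := x) (by linarith) hd.le
  have hlower := le_weightedLogIntegral hx hd.le
  rw [weightedLogIntegral] at hupper hlower
  set L := log x
  set M := exp (-(d / L)) * (x / L ^ 2)
  have hL : 0 < L := log_pos (by linarith)
  have hl : 1 ≤ log L := one_le_log_log hx
  have hM : 0 ≤ M := by positivity
  have hD : 0 ≤ d / L := by positivity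
  rw [abs_sub_le_iff]
  constructor
  · calc _ ≤ M * (400 / L) := by linarith [mul_add M 1 (400 / L)]
      _ ≤ _ := by gcongr; nlinarith
  · calc _ ≤ M * ((2 * (d / L) + 1) * log L / L) := by
          linarith [mul_sub M 1 ((2 * (d / L) + 1) * log L / L)]
      _ ≤ _ := by gcongr; nlinarith
end
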